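/- For all real numbers s > 0 and c > 0, the function F(t) = min( 2·arccosh(cosh(t/2)·cosh(s/2)), arccosh(cosh(s)·cosh(t/2)·cosh(c − t/2) − sinh(t/2)·sinh(c − t/2)) ) on [0, c] attains its maximum exactly at the unique point t₀ ∈ (0, c) where the two arguments of the minimum are equal. -/
import Mathlib

noncomputable def arccosh (x : ℝ) : ℝ := Real.log (x + Real.sqrt (x ^ 2 - 1))

lemma arccosh_cosh {y : ℝ} (hy : 0 ≤ y) : arccosh (Real.cosh y) = y := by
  unfold arccosh
  have h1 : Real.cosh y ^ 2 - 1 = Real.sinh y ^ 2 := by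
    have := Real.cosh_sq y; linarith
  rw [h1, Real.sqrt_sq (Real.sinh_nonneg_iff.2 hy), Real.cosh_add_sinh, Real.log_exp]

lemma arccosh_lt_arccosh {x y : ℝ} (hx : 1 ≤ x) (hxy : x < y) : arccosh x < arccosh y := by
  unfold arccosh
  have hx0 : (0:ℝ) < x + Real.sqrt (x ^ 2 - 1) :=
    lt_of_lt_of_le (by linarith) (le_add_of_nonneg_right (Real.sqrt_nonneg _))
  apply Real.log_lt_log hx0
  have : Real.sqrt (x ^ 2 - 1) ≤ Real.sqrt (y ^ 2 - 1) := by
    apply Real.sqrt_le_sqrt; nlinarith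
  linarith

lemma two_arccosh {x : ℝ} (hx : 1 ≤ x) : 2 * arccosh x = arccosh (2 * x ^ 2 - 1) := by
  unfold arccosh
  have h0 : (0:ℝ) ≤ x ^ 2 - 1 := by nlinarith
  have hs : Real.sqrt (x ^ 2 - 1) ^ 2 = x ^ 2 - 1 := Real.sq_sqrt h0
  have h1 : (2 * x ^ 2 - 1) ^ 2 - 1 = (2 * x * Real.sqrt (x ^ 2 - 1)) ^ 2 := by
    rw [mul_pow, mul_pow, hs]; ring
  have h2 : Real.sqrt ((2 * x ^ 2 - 1) ^ 2 - 1) = 2 * x * Real.sqrt (x ^ 2 - 1) := by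
    rw [h1, Real.sqrt_sq (by positivity)]
  have h3 : 2 * x ^ 2 - 1 + Real.sqrt ((2 * x ^ 2 - 1) ^ 2 - 1)
      = (x + Real.sqrt (x ^ 2 - 1)) ^ 2 := by
    rw [h2]; nlinarith [hs]
  rw [h3, Real.log_pow]
  push_cast; ring

lemma arccosh_continuousOn : ContinuousOn arccosh (Set.Ici 1) := by
  apply ContinuousOn.log
  · exact (continuous_id.add ((Real.continuous_sqrt.comp (by continuity)))).continuousOn
  · intro x hx
    simp only [Set.mem_Ici] at hx
    have := Real.sqrt_nonneg (x ^ 2 - 1)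
    dsimp; linarith

noncomputable def aF (s t : ℝ) : ℝ := Real.cosh (t / 2) * Real.cosh (s / 2)

noncomputable def bF (s c t : ℝ) : ℝ :=
  Real.cosh s * Real.cosh (t / 2) * Real.cosh (c - t / 2) -
    Real.sinh (t / 2) * Real.sinh (c - t / 2)

noncomputable def fF (s t : ℝ) : ℝ := 2 * arccosh (aF s t)

noncomputable def gF (s c t : ℝ) : ℝ := arccosh (bF s c t)

lemma bF_eq (s c t : ℝ) :
    bF s c t = (Real.cosh c * (Real.cosh s - 1) + Real.cosh (c - t) * (Real.cosh s + 1)) / 2 := by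
  unfold bF
  have h1 := Real.cosh_add (c - t/2) (t/2)
  have h2 := Real.cosh_sub (c - t/2) (t/2)
  have e1 : c - t/2 + t/2 = c := by ring
  have e2 : c - t/2 - t/2 = c - t := by ring
  rw [e1] at h1; rw [e2] at h2
  linear_combination ((1 - Real.cosh s)/2) * h1 + ((-(Real.cosh s) - 1)/2) * h2

lemma one_le_aF (s t : ℝ) : 1 ≤ aF s t := by
  unfold aF
  nlinarith [Real.one_le_cosh (t/2), Real.one_le_cosh (s/2)]

lemma one_le_bF {s : ℝ} (c t : ℝ) (hs : 0 < s) : 1 ≤ bF s c t := by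
  rw [bF_eq]
  have hcs : 1 < Real.cosh s := Real.one_lt_cosh.2 (ne_of_gt hs)
  have h1 := Real.one_le_cosh c
  have h2 := Real.one_le_cosh (c - t)
  nlinarith [mul_nonneg (sub_nonneg.2 h1) (sub_nonneg.2 hcs.le),
    mul_nonneg (sub_nonneg.2 h2) (by linarith : (0:ℝ) ≤ Real.cosh s + 1)]

lemma fF_mono {s : ℝ} (hs : 0 < s) {t1 t2 : ℝ} (h1 : 0 ≤ t1) (h2 : t1 < t2) :
    fF s t1 < fF s t2 := by
  have hch : Real.cosh (t1/2) < Real.cosh (t2/2) := by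
    rw [Real.cosh_lt_cosh, abs_of_nonneg (by linarith), abs_of_nonneg (by linarith)]
    linarith
  have hA : aF s t1 < aF s t2 := by
    unfold aF; have := Real.cosh_pos (s/2); nlinarith
  have := arccosh_lt_arccosh (one_le_aF s t1) hA
  unfold fF; linarith

lemma gF_anti {s c : ℝ} (hs : 0 < s) {t1 t2 : ℝ} (h1 : 0 ≤ t1) (h2 : t1 < t2) (h3 : t2 ≤ c) :
    gF s c t2 < gF s c t1 := by
  have hch : Real.cosh (c - t2) < Real.cosh (c - t1) := by
    rw [Real.cosh_lt_cosh, abs_of_nonneg (by linarith), abs_of_nonneg (by linarith)]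
    linarith
  have hcs : 1 < Real.cosh s := Real.one_lt_cosh.2 (ne_of_gt hs)
  have hB : bF s c t2 < bF s c t1 := by
    rw [bF_eq, bF_eq]
    nlinarith [mul_pos (show (0:ℝ) < Real.cosh s + 1 by linarith) (sub_pos.2 hch)]
  exact arccosh_lt_arccosh (one_le_bF c t2 hs) hB

/-- For all reals `s > 0` and `c > 0`, the function
`F(t) = min(2·arccosh(cosh(t/2)·cosh(s/2)),
           arccosh(cosh s·cosh(t/2)·cosh(c − t/2) − sinh(t/2)·sinh(c − t/2)))`
on `[0, c]` attains its maximum exactly at the unique point `t₀ ∈ (0, c)` where the two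
arguments of the minimum are equal. -/
theorem min_maximized_at_crossing (s c : ℝ) (hs : s > 0) (hc : c > 0) :
    ∃ t₀ ∈ Set.Ioo 0 c,
      (2 * arccosh (Real.cosh (t₀ / 2) * Real.cosh (s / 2)) =
        arccosh (Real.cosh s * Real.cosh (t₀ / 2) * Real.cosh (c - t₀ / 2) -
          Real.sinh (t₀ / 2) * Real.sinh (c - t₀ / 2))) ∧
      (∀ t ∈ Set.Ioo 0 c,
        2 * arccosh (Real.cosh (t / 2) * Real.cosh (s / 2)) =
          arccosh (Real.cosh s * Real.cosh (t / 2) * Real.cosh (c - t / 2) -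
            Real.sinh (t / 2) * Real.sinh (c - t / 2)) → t = t₀) ∧
      (∀ t ∈ Set.Icc 0 c, t ≠ t₀ →
        min (2 * arccosh (Real.cosh (t / 2) * Real.cosh (s / 2)))
            (arccosh (Real.cosh s * Real.cosh (t / 2) * Real.cosh (c - t / 2) -
              Real.sinh (t / 2) * Real.sinh (c - t / 2))) <
        min (2 * arccosh (Real.cosh (t₀ / 2) * Real.cosh (s / 2)))
            (arccosh (Real.cosh s * Real.cosh (t₀ / 2) * Real.cosh (c - t₀ / 2) -
              Real.sinh (t₀ / 2) * Real.sinh (c - t₀ / 2)))) := by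
  classical
  have hcs : 1 < Real.cosh s := Real.one_lt_cosh.2 (ne_of_gt hs)
  have hcc : 1 < Real.cosh c := Real.one_lt_cosh.2 (ne_of_gt hc)
  -- endpoint values
  have hf0 : fF s 0 = s := by
    unfold fF aF
    rw [show (0:ℝ)/2 = 0 by norm_num, Real.cosh_zero, one_mul,
      arccosh_cosh (by linarith : (0:ℝ) ≤ s/2)]
    ring
  have hend0 : fF s 0 < gF s c 0 := by
    rw [hf0]
    have hb0 : bF s c 0 = Real.cosh c * Real.cosh s := by
      rw [bF_eq, show c - (0:ℝ) = c by ring]; ring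
    have h1 : Real.cosh s < Real.cosh c * Real.cosh s := by nlinarith
    have h2 := arccosh_lt_arccosh (le_of_lt hcs) h1
    rw [arccosh_cosh hs.le] at h2
    unfold gF; rw [hb0]; exact h2
  have hendc : gF s c c < fF s c := by
    have hc2 : Real.cosh c = 2 * Real.cosh (c/2) ^ 2 - 1 := by
      have h1 := Real.cosh_two_mul (c/2)
      have h2 := Real.cosh_sq (c/2)
      rw [show 2 * (c/2) = c by ring] at h1
      linarith
    have hs2 : Real.cosh s = 2 * Real.cosh (s/2) ^ 2 - 1 := by
      have h1 := Real.cosh_two_mul (s/2)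
      have h2 := Real.cosh_sq (s/2)
      rw [show 2 * (s/2) = s by ring] at h1
      linarith
    have hGc : bF s c c = (Real.cosh c * (Real.cosh s - 1) + (Real.cosh s + 1)) / 2 := by
      rw [bF_eq, show c - c = (0:ℝ) by ring, Real.cosh_zero]; ring
    have hlt : bF s c c < 2 * (aF s c) ^ 2 - 1 := by
      rw [hGc]; unfold aF; nlinarith
    have h2 := arccosh_lt_arccosh (one_le_bF c c hs) hlt
    unfold fF gF
    rw [two_arccosh (one_le_aF s c)]
    exact h2
  -- continuity
  have cdiv : Continuous fun t : ℝ => t / 2 := continuous_id.div_const 2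
  have csub : Continuous fun t : ℝ => c - t / 2 := continuous_const.sub cdiv
  have contA : Continuous (aF s) :=
    (Real.continuous_cosh.comp cdiv).mul continuous_const
  have contB : Continuous (bF s c) :=
    ((continuous_const.mul (Real.continuous_cosh.comp cdiv)).mul
        (Real.continuous_cosh.comp csub)).sub
      ((Real.continuous_sinh.comp cdiv).mul (Real.continuous_sinh.comp csub))
  have cf : ContinuousOn (fF s) (Set.Icc 0 c) := by
    have h : ContinuousOn (fun t => arccosh (aF s t)) (Set.Icc 0 c) :=
      arccosh_continuousOn.comp contA.continuousOn (fun t _ => one_le_aF s t)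
    exact continuousOn_const.mul h
  have cg : ContinuousOn (gF s c) (Set.Icc 0 c) :=
    arccosh_continuousOn.comp contB.continuousOn (fun t _ => one_le_bF c t hs)
  have chh : ContinuousOn (fun t => fF s t - gF s c t) (Set.Icc 0 c) := cf.sub cg
  -- IVT
  have hmem : (0:ℝ) ∈ Set.Ioo (fF s 0 - gF s c 0) (fF s c - gF s c c) :=
    ⟨by linarith, by linarith⟩
  obtain ⟨t₀, ht₀, ht₀eq⟩ := intermediate_value_Ioo hc.le chh hmem
  have heq : fF s t₀ = gF s c t₀ := by
    have : fF s t₀ - gF s c t₀ = 0 := ht₀eq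
    linarith
  refine ⟨t₀, ht₀, heq, ?_, ?_⟩
  · intro t ht h
    have heqt : fF s t = gF s c t := h
    by_contra hne
    rcases lt_or_gt_of_ne hne with hlt | hgt
    · have h1 := fF_mono hs ht.1.le hlt
      have h2 := gF_anti (c := c) hs ht.1.le hlt ht₀.2.le
      linarith
    · have h1 := fF_mono hs ht₀.1.le hgt
      have h2 := gF_anti (c := c) hs ht₀.1.le hgt ht.2.le
      linarith
  · intro t ht hne
    show min (fF s t) (gF s c t) < min (fF s t₀) (gF s c t₀)
    have hmin0 : min (fF s t₀) (gF s c t₀) = fF s t₀ := by rw [heq, min_self]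
    rcases lt_or_gt_of_ne hne with hlt | hgt
    · calc min (fF s t) (gF s c t) ≤ fF s t := min_le_left _ _
        _ < fF s t₀ := fF_mono hs ht.1 hlt
        _ = min (fF s t₀) (gF s c t₀) := hmin0.symm
    · calc min (fF s t) (gF s c t) ≤ gF s c t := min_le_right _ _
        _ < gF s c t₀ := gF_anti hs ht₀.1.le hgt ht.2
        _ = min (fF s t₀) (gF s c t₀) := by rw [hmin0, heq]
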